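/- Let f₀ : ℝ² → ℝ⁵ be the standard open umbrella f₀(u,v) = (u, v², u·v³, v³, (3/2)·u·v). Let V ⊆ ℝ⁵ be an open neighborhood of 0 and H : V → ℝ a smooth function such that H ∘ f₀ vanishes on some neighborhood of 0 in ℝ² and the derivative DH(0) : ℝ⁵ → ℝ is nonzero. Then the kernel of DH(0) equals the contact hyperplane {w ∈ ℝ⁵ : w₃ = 0} at 0; equivalently, there is a nonzero constant C with DH(0)·w = C·w₃ for all w ∈ ℝ⁵. -/

import Mathlib

noncomputable section

open Filter Topology

/-- `ℝ⁵` with coordinates `(x, y, z, p, q)`. -/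
abbrev R5 := ℝ × ℝ × ℝ × ℝ × ℝ

/-- The standard open umbrella `f₀(u,v) = (u, v², uv³, v³, (3/2)uv)`. -/
def f0 : ℝ × ℝ → R5 :=
  fun a => (a.1, a.2 ^ 2, a.1 * a.2 ^ 3, a.2 ^ 3, (3 / 2) * a.1 * a.2)

lemma f0_zero : f0 (0, 0) = 0 := by simp [f0, Prod.ext_iff]

lemma f0_zero' : f0 (0 : ℝ × ℝ) = 0 := by simp [f0, Prod.ext_iff]

lemma hasDerivAt_f0_v (u v : ℝ) : HasDerivAt (fun t : ℝ => f0 (u, t))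
    (0, 2 * v, u * (3 * v ^ 2), 3 * v ^ 2, 3 / 2 * u) v := by
  unfold f0
  refine HasDerivAt.prodMk (hasDerivAt_const _ _)
    (HasDerivAt.prodMk ?_ (HasDerivAt.prodMk ?_ (HasDerivAt.prodMk ?_ ?_)))
  · simpa using hasDerivAt_pow 2 v
  · simpa using (hasDerivAt_pow 3 v).const_mul u
  · simpa using hasDerivAt_pow 3 v
  · simpa [mul_assoc] using (hasDerivAt_id v).const_mul (3 / 2 * u)

lemma hasDerivAt_f0_u : HasDerivAt (fun t : ℝ => f0 (t, 0))
    ((1, 0, 0, 0, 0) : R5) 0 := by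
  unfold f0
  refine HasDerivAt.prodMk (hasDerivAt_id (0:ℝ))
    (HasDerivAt.prodMk ?_ (HasDerivAt.prodMk ?_ (HasDerivAt.prodMk ?_ ?_)))
  · exact hasDerivAt_const (0:ℝ) ((0:ℝ) ^ 2)
  · simpa using hasDerivAt_const (0:ℝ) (0:ℝ)
  · exact hasDerivAt_const (0:ℝ) ((0:ℝ) ^ 3)
  · have := ((hasDerivAt_id (0:ℝ)).const_mul (3/2 : ℝ)).mul_const (0:ℝ)
    simpa [mul_assoc] using this

/-- continuity of evaluation -/
lemma cont_eval : Continuous (fun p : (R5 →L[ℝ] ℝ) × R5 => p.1 p.2) :=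
  isBoundedBilinearMap_apply.continuous

theorem stmt12 (V : Set R5) (hV : IsOpen V) (h0V : (0 : R5) ∈ V)
    (H : R5 → ℝ) (hH : ContDiffOn ℝ (⊤ : ℕ∞) H V)
    (hvan : ∃ s ∈ nhds (0 : ℝ × ℝ), ∀ a ∈ s, H (f0 a) = 0)
    (hne : fderiv ℝ H 0 ≠ 0) :
    {w : R5 | fderiv ℝ H 0 w = 0} = {w : R5 | w.2.2.1 = 0} ∧
    ∃ C : ℝ, C ≠ 0 ∧ ∀ w : R5, fderiv ℝ H 0 w = C * w.2.2.1 := by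
  classical
  obtain ⟨s, hs, hvan⟩ := hvan
  set L : R5 → (R5 →L[ℝ] ℝ) := fderiv ℝ H with hL
  -- smoothness facts at 0
  have hC : ContDiffAt ℝ (⊤ : ℕ∞) H 0 := hH.contDiffAt (hV.mem_nhds h0V)
  have hCL : ContDiffAt ℝ (⊤ : ℕ∞) L 0 := hC.fderiv_right (by exact_mod_cast le_top)
  have hDcont : ContinuousAt L 0 := hCL.continuousAt
  have hDdiff : DifferentiableAt ℝ L 0 := hCL.differentiableAt (by simp)
  -- find ε
  have hf0c : Continuous f0 := by unfold f0; fun_prop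
  have hpre : f0 ⁻¹' V ∈ 𝓝 (0 : ℝ × ℝ) := by
    have h0 : f0 (0,0) = 0 := f0_zero
    have := hf0c.continuousAt (x := ((0,0) : ℝ × ℝ)) (hV.mem_nhds (by rw [h0]; exact h0V))
    exact this
  obtain ⟨ε, hε, hball⟩ := Metric.mem_nhds_iff.1 (inter_mem hs hpre)
  have hmemball : ∀ u v : ℝ, |u| < ε → |v| < ε → ((u, v) : ℝ × ℝ) ∈ Metric.ball (0 : ℝ × ℝ) ε := by
    intro u v hu hv
    simp [Metric.mem_ball, Prod.dist_eq, Real.dist_eq, Prod.norm_def, Real.norm_eq_abs, max_lt_iff, hu, hv]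
  have hmemV : ∀ u v : ℝ, |u| < ε → |v| < ε → f0 (u, v) ∈ V := fun u v hu hv =>
    (hball (hmemball u v hu hv)).2
  have hvan' : ∀ u v : ℝ, |u| < ε → |v| < ε → H (f0 (u, v)) = 0 := fun u v hu hv =>
    hvan _ (hball (hmemball u v hu hv)).1
  have hdiffH : ∀ u v : ℝ, |u| < ε → |v| < ε → HasFDerivAt H (L (f0 (u, v))) (f0 (u, v)) :=
    fun u v hu hv =>
      ((hH.contDiffAt (hV.mem_nhds (hmemV u v hu hv))).differentiableAt (by simp)).hasFDerivAt
  -- main relation E2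
  have E2 : ∀ u v : ℝ, |u| < ε → |v| < ε →
      L (f0 (u, v)) (0, 2 * v, u * (3 * v ^ 2), 3 * v ^ 2, 3 / 2 * u) = 0 := by
    intro u v hu hv
    have hcomp : HasDerivAt (fun t => H (f0 (u, t)))
        (L (f0 (u, v)) (0, 2 * v, u * (3 * v ^ 2), 3 * v ^ 2, 3 / 2 * u)) v :=
      (hdiffH u v hu hv).comp_hasDerivAt v (hasDerivAt_f0_v u v)
    have hev : (fun t => H (f0 (u, t))) =ᶠ[𝓝 v] fun _ => 0 := by
      have hvmem : v ∈ Metric.ball (0 : ℝ) ε := by simpa [Real.dist_eq] using hv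
      filter_upwards [Metric.isOpen_ball.mem_nhds hvmem] with t ht
      exact hvan' u t hu (by simpa [Real.dist_eq] using ht)
    have h0 : HasDerivAt (fun _ : ℝ => (0:ℝ))
        (L (f0 (u, v)) (0, 2 * v, u * (3 * v ^ 2), 3 * v ^ 2, 3 / 2 * u)) v :=
      hcomp.congr_of_eventuallyEq hev.symm
    exact (h0.unique (hasDerivAt_const v 0)).symm ▸ rfl

  have h0ε : |(0:ℝ)| < ε := by simpa using hε
  have hsmall : ∀ᶠ t in 𝓝[≠] (0:ℝ), |t| < ε := by
    have h1 : ∀ᶠ t in 𝓝 (0:ℝ), |t| < ε := by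
      filter_upwards [Metric.ball_mem_nhds (0:ℝ) hε] with t ht
      simpa [Real.dist_eq] using ht
    exact h1.filter_mono nhdsWithin_le_nhds
  -- x-component vanishes
  have ha : L 0 ((1,0,0,0,0) : R5) = 0 := by
    have hkey : L (f0 (0,0)) ((1,0,0,0,0) : R5) = 0 := by
      have hcomp : HasDerivAt (fun t => H (f0 (t, 0)))
          (L (f0 (0,0)) ((1,0,0,0,0) : R5)) 0 :=
        (hdiffH 0 0 h0ε h0ε).comp_hasDerivAt 0 hasDerivAt_f0_u
      have hev : (fun t => H (f0 (t, 0))) =ᶠ[𝓝 (0:ℝ)] fun _ => 0 := by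
        have h1 : ∀ᶠ t in 𝓝 (0:ℝ), |t| < ε := by
          filter_upwards [Metric.ball_mem_nhds (0:ℝ) hε] with t ht
          simpa [Real.dist_eq] using ht
        filter_upwards [h1] with t ht
        exact hvan' t 0 ht h0ε
      exact (hcomp.congr_of_eventuallyEq hev.symm).unique (hasDerivAt_const 0 0)
    rwa [f0_zero] at hkey
  -- y and q components vanish
  have hbe : ∀ σ : ℝ, |σ| = 1 → L 0 ((0,2,0,0,3/2*σ) : R5) = 0 := by
    intro σ hσ
    set F : ℝ → ℝ := fun t => L (f0 (σ*t, t)) ((0, 2, σ*t*(3*t), 3*t, 3/2*σ) : R5) with hFdef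
    have hγc : Tendsto (fun t : ℝ => f0 (σ*t, t)) (𝓝 0) (𝓝 0) := by
      have hcont : Continuous fun t : ℝ => f0 (σ*t, t) := hf0c.comp (by fun_prop)
      have := hcont.tendsto 0
      simpa [f0_zero', f0_zero] using this
    have hvecc : Tendsto (fun t : ℝ => ((0, 2, σ*t*(3*t), 3*t, 3/2*σ) : R5)) (𝓝 0)
        (𝓝 ((0,2,0,0,3/2*σ) : R5)) := by
      have hcont : Continuous fun t : ℝ => ((0, 2, σ*t*(3*t), 3*t, 3/2*σ) : R5) := by fun_prop
      have := hcont.tendsto 0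
      simpa using this
    have hFt : Tendsto F (𝓝 0) (𝓝 (L 0 ((0,2,0,0,3/2*σ) : R5))) := by
      have hpair : Tendsto (fun t : ℝ => (L (f0 (σ*t, t)), ((0, 2, σ*t*(3*t), 3*t, 3/2*σ) : R5)))
          (𝓝 0) (𝓝 (L 0, ((0,2,0,0,3/2*σ) : R5))) :=
        ((hDcont.tendsto.comp hγc).prodMk_nhds hvecc)
      exact (cont_eval.tendsto _).comp hpair
    have hF0 : ∀ᶠ t in 𝓝[≠] (0:ℝ), F t = 0 := by
      filter_upwards [hsmall, self_mem_nhdsWithin] with t ht htne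
      have htne' : t ≠ 0 := htne
      have hσt : |σ*t| < ε := by rw [abs_mul, hσ, one_mul]; exact ht
      have h2 := E2 (σ*t) t hσt ht
      have hvec : ((0, 2*t, (σ*t)*(3*t^2), 3*t^2, 3/2*(σ*t)) : R5)
          = t • ((0, 2, σ*t*(3*t), 3*t, 3/2*σ) : R5) := by
        simp [Prod.ext_iff]; and_intros <;> ring
      rw [hvec, map_smul] at h2
      have := smul_eq_zero.mp h2
      exact this.resolve_left htne'
    have hFt' : Tendsto F (𝓝[≠] (0:ℝ)) (𝓝 (L 0 ((0,2,0,0,3/2*σ) : R5))) :=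
      hFt.mono_left nhdsWithin_le_nhds
    have hFz : Tendsto F (𝓝[≠] (0:ℝ)) (𝓝 0) :=
      Tendsto.congr' (hF0.mono fun t h => h.symm) tendsto_const_nhds
    exact tendsto_nhds_unique hFt' hFz
  have hb : L 0 ((0,1,0,0,0) : R5) = 0 := by
    have h1 := hbe 1 (by norm_num)
    have h2 := hbe (-1) (by norm_num)
    have hsum : L 0 (((0,2,0,0,3/2*1) : R5) + ((0,2,0,0,3/2*(-1)) : R5)) = 0 := by
      rw [map_add, h1, h2]; ring
    have hv : (((0,2,0,0,3/2*1) : R5) + ((0,2,0,0,3/2*(-1)) : R5))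
        = (4:ℝ) • ((0,1,0,0,0) : R5) := by
      norm_num [Prod.ext_iff]
    rw [hv, map_smul, smul_eq_mul] at hsum
    linarith
  have he : L 0 ((0,0,0,0,1) : R5) = 0 := by
    have h1 := hbe 1 (by norm_num)
    have h2 := hbe (-1) (by norm_num)
    have hsum : L 0 (((0,2,0,0,3/2*1) : R5) - ((0,2,0,0,3/2*(-1)) : R5)) = 0 := by
      rw [map_sub, h1, h2]; ring
    have hv : (((0,2,0,0,3/2*1) : R5) - ((0,2,0,0,3/2*(-1)) : R5))
        = (3:ℝ) • ((0,0,0,0,1) : R5) := by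
      norm_num [Prod.ext_iff]
    rw [hv, map_smul, smul_eq_mul] at hsum
    linarith
  -- p component vanishes, via a second-order argument
  have hγ0 : HasDerivAt (fun t : ℝ => f0 (0, t)) (0 : R5) 0 := by
    have := hasDerivAt_f0_v 0 0
    convert this using 1; simp [Prod.ext_iff]
  set φ : ℝ → ℝ := fun t => L (f0 (0, t)) ((0,1,0,0,0) : R5) with hφdef
  have hLγ : HasDerivAt (fun t : ℝ => L (f0 (0, t))) 0 0 := by
    have h1 : HasFDerivAt L (fderiv ℝ L 0) (f0 (0,0)) := by
      rw [f0_zero]; exact hDdiff.hasFDerivAt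
    have h2 := h1.comp_hasDerivAt 0 hγ0
    simpa [Function.comp_def] using h2
  have hφder : HasDerivAt φ 0 0 := by
    have h2 := (ContinuousLinearMap.apply ℝ ℝ ((0,1,0,0,0) : R5)).hasFDerivAt.comp_hasDerivAt
      (0:ℝ) hLγ
    simpa [hφdef, Function.comp_def] using h2
  have hφ0 : φ 0 = 0 := by
    show L (f0 (0, 0)) ((0,1,0,0,0) : R5) = 0
    rw [f0_zero]; exact hb
  have hslope : Tendsto (fun t : ℝ => φ t / t) (𝓝[≠] (0:ℝ)) (𝓝 0) := by
    have h := hasDerivAt_iff_tendsto_slope.mp hφder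
    refine h.congr fun t => ?_
    simp [slope_def_field, hφ0]
  have hd : L 0 ((0,0,0,1,0) : R5) = 0 := by
    set ρ : ℝ → ℝ := fun t => L (f0 (0, t)) ((0,0,0,1,0) : R5) with hρdef
    have hρlim : Tendsto ρ (𝓝[≠] (0:ℝ)) (𝓝 (L 0 ((0,0,0,1,0) : R5))) := by
      have hγc : Tendsto (fun t : ℝ => f0 (0, t)) (𝓝 0) (𝓝 0) := by
        have hcont : Continuous fun t : ℝ => f0 (0, t) := hf0c.comp (by fun_prop)
        have := hcont.tendsto 0
        simpa [f0_zero', f0_zero] using this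
      have := ((ContinuousLinearMap.apply ℝ ℝ ((0,0,0,1,0) : R5)).continuous.tendsto _).comp
        (hDcont.tendsto.comp hγc)
      exact (this.mono_left nhdsWithin_le_nhds)
    have hρ0 : Tendsto ρ (𝓝[≠] (0:ℝ)) (𝓝 0) := by
      have heq : ∀ᶠ t in 𝓝[≠] (0:ℝ), ρ t = -(2/3) * (φ t / t) := by
        filter_upwards [hsmall, self_mem_nhdsWithin] with t ht htne
        have htne' : t ≠ 0 := htne
        have h2 := E2 0 t h0ε ht
        have hvec : ((0, 2*t, 0*(3*t^2), 3*t^2, 3/2*0) : R5)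
            = (2*t) • ((0,1,0,0,0) : R5) + (3*t^2) • ((0,0,0,1,0) : R5) := by
          simp [Prod.ext_iff]
        rw [hvec, map_add, map_smul, map_smul, smul_eq_mul, smul_eq_mul] at h2
        -- h2 : 2*t*φ t + 3*t^2 * ρ t = 0
        have h5 : ρ t * (3 * t) = -(2 * φ t) :=
          mul_left_cancel₀ htne' (by linear_combination h2)
        field_simp
        linarith [h5]
      have h6 := hslope.const_mul (-(2/3) : ℝ)
      exact Tendsto.congr' ((heq.mono fun t h => h.symm)) (by simpa using h6)
    exact tendsto_nhds_unique hρlim hρ0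
  -- assemble
  have hdecomp : ∀ w : R5, L 0 w = L 0 ((0,0,1,0,0) : R5) * w.2.2.1 := by
    intro w
    obtain ⟨x, y, z, p, q⟩ := w
    have hw : ((x,y,z,p,q) : R5) = x•((1,0,0,0,0):R5) + y•((0,1,0,0,0):R5)
        + z•((0,0,1,0,0):R5) + p•((0,0,0,1,0):R5) + q•((0,0,0,0,1):R5) := by
      simp [Prod.ext_iff]
    show L 0 ((x,y,z,p,q) : R5) = L 0 ((0,0,1,0,0) : R5) * z
    rw [hw]
    simp only [map_add, map_smul, smul_eq_mul, ha, hb, hd, he]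
    ring
  have hc : L 0 ((0,0,1,0,0) : R5) ≠ 0 := by
    intro h
    apply hne
    refine ContinuousLinearMap.ext fun w => ?_
    rw [hdecomp w, h, zero_mul]
    simp
  refine ⟨?_, L 0 ((0,0,1,0,0) : R5), hc, hdecomp⟩
  ext w
  simp only [Set.mem_setOf_eq, hdecomp w, mul_eq_zero]
  tauto
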